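/- Let f_1, ..., f_m : ℝ^n → ℝ be differentiable with L-Lipschitz gradients (L > 0) and bounded below by F_inf ∈ ℝ. Let (Ω, μ) be a probability space and, for k = 0, 1, ..., K, let X_k, D_k, U_k : Ω → ℝ^n be measurable with X_0 ≡ x_0 constant and X_{k+1} = X_k + α_k U_k almost everywhere, where α_k > 0. Assume that almost everywhere, for every k < K: max_{i ∈ [m]} ⟨∇f_i(X_k), D_k⟩ + (1/2)‖D_k‖₂² ≤ 0 and ‖∇f_i(X_k)‖₂ ≤ C_f for all i ∈ [m], and assume ‖D_k‖₂² and ‖U_k − D_k‖₂² are integrable. Then Σ_{k=0}^{K−1} (α_k/2 − L α_k²) · E[‖D_k‖₂²] ≤ Σ_{k=0}^{K−1} ( α_k C_f (E[‖U_k − D_k‖₂²])^{1/2} + L α_k² E[‖U_k − D_k‖₂²] ) + M_f, where M_f = max_{i ∈ [m]} f_i(x_0) − F_inf. -/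

import Mathlib

/-!
Track the potential `G k = max_i f_i (X k)`. For an `L`-smooth `f_i` the descent lemma gives
`f_i (x + α u) ≤ f_i x + α ⟪∇f_i x, u⟫ + (L/2) α² ‖u‖²`; splitting `u = d + (u - d)`, the MGDA
inequality bounds `⟪∇f_i x, d⟫ ≤ -‖d‖²/2`, Cauchy–Schwarz and the gradient bound give
`⟪∇f_i x, u - d⟫ ≤ C_f ‖u - d‖`, and `‖u‖² ≤ 2‖d‖² + 2‖u - d‖²`. Hence, almost surely,
`G (k+1) ≤ G k + α C_f ‖U - D‖ + L α² ‖U - D‖² - (α/2 - L α²) ‖D‖²`.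
Taking expectations, with `E‖U - D‖ ≤ √(E‖U - D‖²)`, and telescoping between `G 0 = max_i f_i x₀`
and `G K ≥ F_inf` gives the bound. Integrability of each `G k` comes along the induction, since
`G (k+1)` is squeezed between `F_inf` and `G k` plus an integrable increment.
-/

open scoped RealInnerProductSpace
open MeasureTheory

section Descent

variable {E : Type*} [NormedAddCommGroup E] [InnerProductSpace ℝ E] [CompleteSpace E] {L : ℝ}

theorem Differentiable.le_add_inner_gradient_add_sq {f : E → ℝ} (hf : Differentiable ℝ f)
    (hlip : ∀ x y, ‖gradient f x - gradient f y‖ ≤ L * ‖x - y‖) (x v : E) :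
    f (x + v) ≤ f x + ⟪gradient f x, v⟫ + L / 2 * ‖v‖ ^ 2 := by
  set φ : ℝ → ℝ := fun t => f (x + t • v) - t * ⟪gradient f x, v⟫ - L / 2 * t ^ 2 * ‖v‖ ^ 2
  have hφ : ∀ t, HasDerivAt φ (⟪gradient f (x + t • v) - gradient f x, v⟫ - L * t * ‖v‖ ^ 2) t := by
    intro t
    have hcurve : HasDerivAt (fun t : ℝ => x + t • v) v t := by
      simpa using ((hasDerivAt_id t).smul_const v).const_add x
    refine HasDerivAt.congr_deriv (f := φ) ((((hf _).hasGradientAt.hasFDerivAt.comp_hasDerivAt t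
      hcurve).sub ((hasDerivAt_id t).mul_const ⟪gradient f x, v⟫)).sub
      (((hasDerivAt_pow 2 t).const_mul (L / 2)).mul_const (‖v‖ ^ 2))) ?_
    simp only [InnerProductSpace.toDual_apply_apply, inner_sub_left]
    ring
  have hanti : AntitoneOn φ (Set.Icc 0 1) := by
    refine antitoneOn_of_hasDerivWithinAt_nonpos (convex_Icc 0 1)
      (fun t _ => (hφ t).continuousAt.continuousWithinAt) (fun t _ => (hφ t).hasDerivWithinAt) ?_
    intro t ht
    rw [interior_Icc] at ht
    have hdist : ‖gradient f (x + t • v) - gradient f x‖ ≤ L * (t * ‖v‖) := by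
      simpa [norm_smul, abs_of_pos ht.1] using hlip (x + t • v) x
    have hcs := (real_inner_le_norm _ _).trans (mul_le_mul_of_nonneg_right hdist (norm_nonneg v))
    linarith
  have h01 := hanti (by simp) (by simp) zero_le_one
  simp only [φ, zero_smul, add_zero, one_smul] at h01
  linarith

theorem Differentiable.le_add_of_descent_direction {f : E → ℝ} (hf : Differentiable ℝ f)
    (hlip : ∀ x y, ‖gradient f x - gradient f y‖ ≤ L * ‖x - y‖) (hL : 0 ≤ L)
    {α Cf : ℝ} (hα : 0 ≤ α) {x u d : E}
    (hdir : ⟪gradient f x, d⟫ + 1 / 2 * ‖d‖ ^ 2 ≤ 0) (hgrad : ‖gradient f x‖ ≤ Cf) :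
    f (x + α • u) ≤ f x + (α * Cf * ‖u - d‖ + L * α ^ 2 * ‖u - d‖ ^ 2
      - (α / 2 - L * α ^ 2) * ‖d‖ ^ 2) := by
  have hdesc := hf.le_add_inner_gradient_add_sq hlip x (α • u)
  rw [real_inner_smul_right, norm_smul, mul_pow, Real.norm_eq_abs, sq_abs] at hdesc
  have hinner : ⟪gradient f x, u⟫ ≤ -(1 / 2 * ‖d‖ ^ 2) + Cf * ‖u - d‖ :=
    calc ⟪gradient f x, u⟫ = ⟪gradient f x, d⟫ + ⟪gradient f x, u - d⟫ := by
          rw [← inner_add_right, add_sub_cancel]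
      _ ≤ _ := add_le_add (by linarith)
          ((real_inner_le_norm _ _).trans (mul_le_mul_of_nonneg_right hgrad (norm_nonneg _)))
  have hnorm : ‖u‖ ^ 2 ≤ 2 * (‖d‖ ^ 2 + ‖u - d‖ ^ 2) :=
    calc ‖u‖ ^ 2 = ‖d + (u - d)‖ ^ 2 := by rw [add_sub_cancel]
      _ ≤ (‖d‖ + ‖u - d‖) ^ 2 := by gcongr; exact norm_add_le _ _
      _ ≤ _ := add_sq_le
  nlinarith [mul_le_mul_of_nonneg_left hinner hα,
    mul_le_mul_of_nonneg_left hnorm (by positivity : 0 ≤ L * α ^ 2)]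

theorem Finset.sup'_le_sup'_add_of_descent_direction {ι : Type*} {s : Finset ι}
    (hs : s.Nonempty) {f : ι → E → ℝ} (hf : ∀ i ∈ s, Differentiable ℝ (f i))
    (hlip : ∀ i ∈ s, ∀ x y, ‖gradient (f i) x - gradient (f i) y‖ ≤ L * ‖x - y‖) (hL : 0 ≤ L)
    {α Cf : ℝ} (hα : 0 ≤ α) {x u d : E}
    (hdir : s.sup' hs (fun i => ⟪gradient (f i) x, d⟫) + 1 / 2 * ‖d‖ ^ 2 ≤ 0)
    (hgrad : ∀ i ∈ s, ‖gradient (f i) x‖ ≤ Cf) :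
    s.sup' hs (fun i => f i (x + α • u)) ≤ s.sup' hs (fun i => f i x) +
      (α * Cf * ‖u - d‖ + L * α ^ 2 * ‖u - d‖ ^ 2 - (α / 2 - L * α ^ 2) * ‖d‖ ^ 2) := by
  refine Finset.sup'_le _ _ fun i hi => ?_
  have hdir_i : ⟪gradient (f i) x, d⟫ + 1 / 2 * ‖d‖ ^ 2 ≤ 0 :=
    (add_le_add_left (s.le_sup' (fun j => ⟪gradient (f j) x, d⟫) hi) _).trans hdir
  refine ((hf i hi).le_add_of_descent_direction (hlip i hi) hL hα hdir_i (hgrad i hi)).trans ?_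
  gcongr
  exact s.le_sup' (fun j => f j x) hi

end Descent

section Expectation

variable {Ω : Type*} [MeasurableSpace Ω] {μ : Measure Ω}
  {E : Type*} [NormedAddCommGroup E] {V W : Ω → E}

theorem memLp_two_norm_of_integrable_norm_sq
    (h : Integrable (fun ω => ‖V ω‖ ^ 2) μ) : MemLp (fun ω => ‖V ω‖) 2 μ := by
  have hmeas : AEStronglyMeasurable (fun ω => ‖V ω‖) μ :=
    (Real.continuous_sqrt.comp_aestronglyMeasurable h.1).congr
      (ae_of_all _ fun ω => Real.sqrt_sq (norm_nonneg (V ω)))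
  exact (memLp_two_iff_integrable_sq hmeas).2 h

theorem integral_le_sqrt_integral_sq [IsProbabilityMeasure μ] {g : Ω → ℝ} (hg : MemLp g 2 μ) :
    ∫ ω, g ω ∂μ ≤ √(∫ ω, g ω ^ 2 ∂μ) := by
  have hvar := ProbabilityTheory.variance_nonneg g μ
  rw [ProbabilityTheory.variance_eq_sub hg] at hvar
  exact (le_abs_self _).trans (Real.abs_le_sqrt (by simpa using hvar))

theorem le_integral_add_sum_integral_of_le_add [IsProbabilityMeasure μ] {g c : ℕ → Ω → ℝ}
    {b : ℝ} {K : ℕ} (hg : ∀ k ≤ K, AEStronglyMeasurable (g k) μ)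
    (hb : ∀ k ≤ K, ∀ᵐ ω ∂μ, b ≤ g k ω) (hg₀ : Integrable (g 0) μ)
    (hc : ∀ k < K, Integrable (c k) μ) (hgc : ∀ k < K, ∀ᵐ ω ∂μ, g (k + 1) ω ≤ g k ω + c k ω) :
    b ≤ ∫ ω, g 0 ω ∂μ + ∑ k ∈ Finset.range K, ∫ ω, c k ω ∂μ := by
  have telescope : ∀ j ≤ K, Integrable (g j) μ ∧
      ∫ ω, g j ω ∂μ ≤ ∫ ω, g 0 ω ∂μ + ∑ k ∈ Finset.range j, ∫ ω, c k ω ∂μ := by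
    intro j
    induction j with
    | zero => simp [hg₀]
    | succ j ih =>
      intro hj
      obtain ⟨hgj, hle⟩ := ih (by omega)
      have hgc_int := hgj.add (hc j (by omega))
      have hint : Integrable (g (j + 1)) μ :=
        integrable_of_le_of_le (hg _ hj) (hb _ hj) (hgc j hj) (integrable_const b) hgc_int
      refine ⟨hint, ?_⟩
      have hstep := integral_mono_ae hint hgc_int (hgc j hj)
      rw [integral_add' hgj (hc j hj)] at hstep
      rw [Finset.sum_range_succ]
      linarith
  obtain ⟨hgK, hK⟩ := telescope K le_rfl
  have hbK : b ≤ ∫ ω, g K ω ∂μ := by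
    simpa using integral_mono_ae (integrable_const b) hgK (hb K le_rfl)
  linarith

theorem integrable_mul_norm_add_mul_norm_sq_sub [IsFiniteMeasure μ]
    (hV : Integrable (fun ω => ‖V ω‖ ^ 2) μ) (hW : Integrable (fun ω => ‖W ω‖ ^ 2) μ)
    (a b c : ℝ) : Integrable (fun ω => a * ‖V ω‖ + b * ‖V ω‖ ^ 2 - c * ‖W ω‖ ^ 2) μ :=
  ((((memLp_two_norm_of_integrable_norm_sq hV).integrable one_le_two).const_mul a).add
    (hV.const_mul b)).sub (hW.const_mul c)

theorem integral_mul_norm_add_mul_norm_sq_sub_le [IsProbabilityMeasure μ]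
    (hV : Integrable (fun ω => ‖V ω‖ ^ 2) μ) (hW : Integrable (fun ω => ‖W ω‖ ^ 2) μ)
    {a : ℝ} (ha : 0 ≤ a) (b c : ℝ) :
    ∫ ω, (a * ‖V ω‖ + b * ‖V ω‖ ^ 2 - c * ‖W ω‖ ^ 2) ∂μ ≤
      a * √(∫ ω, ‖V ω‖ ^ 2 ∂μ) + b * ∫ ω, ‖V ω‖ ^ 2 ∂μ - c * ∫ ω, ‖W ω‖ ^ 2 ∂μ := by
  have hV₂ := memLp_two_norm_of_integrable_norm_sq hV
  have hV₁ := (hV₂.integrable one_le_two).const_mul a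
  have hV₁₂ : Integrable (fun ω => a * ‖V ω‖ + b * ‖V ω‖ ^ 2) μ := hV₁.add (hV.const_mul b)
  rw [integral_sub hV₁₂ (hW.const_mul c), integral_add hV₁ (hV.const_mul b),
    integral_const_mul, integral_const_mul, integral_const_mul]
  gcongr
  exact integral_le_sqrt_integral_sq hV₂

end Expectation

/-- Theorem 4.2 of the paper: for differentiable objectives with `L`-Lipschitz gradients,
bounded below by `F_inf`, iterates `X (k+1) = X k + α k • U k` (a.e.) with `X 0 ≡ x₀`,
exact MGDA directions `D k` and gradient norm bound `C_f` holding a.e., one has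
`Σ_{k<K} (α_k/2 - L α_k²) E‖D k‖² ≤ Σ_{k<K} (α_k C_f √(E‖U k - D k‖²) + L α_k² E‖U k - D k‖²) + M_f`
with `M_f = max_i f i x₀ - F_inf`. -/
theorem expected_descent_accumulation_bound
    {n m : ℕ} (hm : 1 ≤ m)
    (f : Fin m → EuclideanSpace ℝ (Fin n) → ℝ)
    (hf : ∀ i, Differentiable ℝ (f i))
    (L : ℝ) (hL : 0 < L)
    (hlip : ∀ (i : Fin m) (x y : EuclideanSpace ℝ (Fin n)),
      ‖gradient (f i) x - gradient (f i) y‖ ≤ L * ‖x - y‖)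
    (Finf : ℝ) (hFinf : ∀ i x, Finf ≤ f i x)
    {Ω : Type*} [MeasurableSpace Ω] (μ : Measure Ω) [IsProbabilityMeasure μ]
    (K : ℕ) (α : ℕ → ℝ) (hα : ∀ k < K, 0 < α k)
    (X D U : ℕ → Ω → EuclideanSpace ℝ (Fin n))
    (hXmeas : ∀ k ≤ K, Measurable (X k))
    (x₀ : EuclideanSpace ℝ (Fin n)) (hX0 : ∀ ω, X 0 ω = x₀)
    (hupdate : ∀ k < K, ∀ᵐ ω ∂μ, X (k + 1) ω = X k ω + α k • U k ω)
    (Cf : ℝ) (hCf : 0 ≤ Cf)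
    (hD : ∀ k < K, ∀ᵐ ω ∂μ,
      Finset.univ.sup'
        (Finset.univ_nonempty_iff.mpr (Fin.pos_iff_nonempty.mp (by omega)))
        (fun i => ⟪gradient (f i) (X k ω), D k ω⟫) + (1 / 2) * ‖D k ω‖ ^ 2 ≤ 0)
    (hgradbound : ∀ k < K, ∀ᵐ ω ∂μ, ∀ i, ‖gradient (f i) (X k ω)‖ ≤ Cf)
    (hDint : ∀ k < K, Integrable (fun ω => ‖D k ω‖ ^ 2) μ)
    (hUDint : ∀ k < K, Integrable (fun ω => ‖U k ω - D k ω‖ ^ 2) μ) :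
    ∑ k ∈ Finset.range K, (α k / 2 - L * α k ^ 2) * (∫ ω, ‖D k ω‖ ^ 2 ∂μ) ≤
      (∑ k ∈ Finset.range K,
        (α k * Cf * Real.sqrt (∫ ω, ‖U k ω - D k ω‖ ^ 2 ∂μ)
          + L * α k ^ 2 * (∫ ω, ‖U k ω - D k ω‖ ^ 2 ∂μ))) +
      (Finset.univ.sup'
        (Finset.univ_nonempty_iff.mpr (Fin.pos_iff_nonempty.mp (by omega)))
        (fun i => f i x₀) - Finf) := by
  have hne : (Finset.univ : Finset (Fin m)).Nonempty :=
    Finset.univ_nonempty_iff.mpr (Fin.pos_iff_nonempty.mp (by omega))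
  set G : ℕ → Ω → ℝ := fun k ω => Finset.univ.sup' hne fun i => f i (X k ω)
  set c : ℕ → Ω → ℝ := fun k ω => α k * Cf * ‖U k ω - D k ω‖ +
    L * α k ^ 2 * ‖U k ω - D k ω‖ ^ 2 - (α k / 2 - L * α k ^ 2) * ‖D k ω‖ ^ 2
  have hG₀ : G 0 = fun _ => Finset.univ.sup' hne fun i => f i x₀ := by
    funext ω
    simp only [G, hX0]
  have hG_meas : ∀ k ≤ K, AEStronglyMeasurable (G k) μ := fun k hk =>
    (Finset.measurable_sup' hne fun i _ => (hf i).continuous.measurable.comp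
      (hXmeas k hk)).aestronglyMeasurable.congr (ae_of_all _ fun ω => Finset.sup'_apply _ _ _)
  have hG_ge : ∀ k ≤ K, ∀ᵐ ω ∂μ, Finf ≤ G k ω := fun k _ =>
    ae_of_all _ fun ω => Finset.le_sup'_of_le _ (Finset.mem_univ ⟨0, hm⟩) (hFinf _ _)
  have hc_int : ∀ k < K, Integrable (c k) μ := fun k hk =>
    integrable_mul_norm_add_mul_norm_sq_sub (hUDint k hk) (hDint k hk) _ _ _
  have hG_step : ∀ k < K, ∀ᵐ ω ∂μ, G (k + 1) ω ≤ G k ω + c k ω := by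
    intro k hk
    filter_upwards [hupdate k hk, hD k hk, hgradbound k hk] with ω hX hdir hgrad
    simp only [G, c, hX]
    exact Finset.sup'_le_sup'_add_of_descent_direction hne (fun i _ => hf i) (fun i _ => hlip i)
      hL.le (hα k hk).le hdir fun i _ => hgrad i
  have hbound := le_integral_add_sum_integral_of_le_add hG_meas hG_ge
    (hG₀ ▸ integrable_const _) hc_int hG_step
  have hc_le : ∑ k ∈ Finset.range K, ∫ ω, c k ω ∂μ ≤ ∑ k ∈ Finset.range K,
      ((α k * Cf * √(∫ ω, ‖U k ω - D k ω‖ ^ 2 ∂μ) + L * α k ^ 2 * ∫ ω, ‖U k ω - D k ω‖ ^ 2 ∂μ)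
        - (α k / 2 - L * α k ^ 2) * ∫ ω, ‖D k ω‖ ^ 2 ∂μ) :=
    Finset.sum_le_sum fun k hk => by
      have hk : k < K := Finset.mem_range.1 hk
      exact integral_mul_norm_add_mul_norm_sq_sub_le (hUDint k hk) (hDint k hk)
        (mul_nonneg (hα k hk).le hCf) _ _
  rw [hG₀, integral_const, probReal_univ, one_smul] at hbound
  rw [Finset.sum_sub_distrib] at hc_le
  linarith
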